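/- Let X be a finite ground set, let 𝒯 be a finite family of subsets of X such that every element of X belongs to at least one member of 𝒯, and let G be the incidence bipartite graph of (X, 𝒯) with thresholds τ(x) = 1 for x ∈ X and τ(T) = |T| for T ∈ 𝒯. Then the minimum cardinality of a target set of G equals the minimum cardinality of a set cover 𝒮 ⊆ 𝒯 of (X, 𝒯). -/

import Mathlib

open scoped Classical

/-- The neighborhood of `u` in `G`, as a finset. -/
noncomputable def nbrs {V : Type*} [Fintype V] (G : SimpleGraph V) (u : V) : Finset V :=
  Finset.univ.filter (fun w => G.Adj u w)

/-- The diffusion process: `diffusion G τ S i` is the set `A[S,i]` of vertices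
active after `i` rounds starting from seed set `S`. -/
noncomputable def diffusion {V : Type*} [Fintype V] (G : SimpleGraph V) (τ : V → ℕ)
    (S : Finset V) : ℕ → Finset V
  | 0 => S
  | (i + 1) => diffusion G τ S i ∪
      Finset.univ.filter (fun u => τ u ≤ (nbrs G u ∩ diffusion G τ S i).card)

/-- The influence of a seed set `S`: all vertices eventually activated. -/
def influence {V : Type*} [Fintype V] (G : SimpleGraph V) (τ : V → ℕ) (S : Finset V) : Set V :=
  {v | ∃ i, v ∈ diffusion G τ S i}

/-- `S` is a target set if its influence is the whole vertex set. -/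
def isTargetSet {V : Type*} [Fintype V] (G : SimpleGraph V) (τ : V → ℕ) (S : Finset V) : Prop :=
  influence G τ S = Set.univ

/-- `C` is a vertex cover of `G`. -/
def isVertexCover {V : Type*} [Fintype V] (G : SimpleGraph V) (C : Finset V) : Prop :=
  ∀ u v, G.Adj u v → u ∈ C ∨ v ∈ C

/-- The incidence bipartite graph of a set system `(X, 𝒯)`: its vertices are the
elements of the ground type together with the members of `𝒯`, and `x` is adjacent
to `T` iff `x ∈ T`. -/
def incGraph {α : Type*} (𝒯 : Finset (Finset α)) :
    SimpleGraph (α ⊕ {T : Finset α // T ∈ 𝒯}) where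
  Adj u w :=
    (∃ (x : α) (T : {T : Finset α // T ∈ 𝒯}), u = Sum.inl x ∧ w = Sum.inr T ∧ x ∈ T.1) ∨
    (∃ (x : α) (T : {T : Finset α // T ∈ 𝒯}), w = Sum.inl x ∧ u = Sum.inr T ∧ x ∈ T.1)
  symm := by
    refine ⟨?_⟩
    rintro u w (⟨x, T, h1, h2, h3⟩ | ⟨x, T, h1, h2, h3⟩)
    · exact Or.inr ⟨x, T, h1, h2, h3⟩
    · exact Or.inl ⟨x, T, h1, h2, h3⟩
  loopless := by
    refine ⟨?_⟩
    rintro u (⟨x, T, h1, h2, -⟩ | ⟨x, T, h1, h2, -⟩) <;> rw [h1] at h2 <;> exact Sum.inl_ne_inr h2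

/-- The threshold function of the incidence graph: `1` on ground elements and
`|T|` on set vertices. -/
def incThreshold {α : Type*} (𝒯 : Finset (Finset α)) : α ⊕ {T : Finset α // T ∈ 𝒯} → ℕ :=
  Sum.elim (fun _ => 1) (fun T => T.1.card)


/-! A set cover `𝒮` seeds a target set of the same size: every element is activated by a set
of `𝒮` in the first round, and then every set by its elements in the second. Conversely, for
any `U ⊆ X` the vertices whose elements all lie in `U` form a set closed under activation, so
the diffusion from `S` never leaves it. Taking for `U` the union of the seeds of a target set
`S`, with a seeded element replaced by some member of `𝒯` containing it, forces `U = X`: this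
is a set cover of size at most `|S|`. -/

open Finset

lemma Finset.card_le_card_inter_iff {β : Type*} {s t : Finset β} : #s ≤ #(s ∩ t) ↔ s ⊆ t :=
  ⟨fun h ↦ inter_eq_left.1 (eq_of_subset_of_card_le inter_subset_left h),
    fun h ↦ by rw [inter_eq_left.2 h]⟩

section Diffusion

variable {V : Type*} [Fintype V] {G : SimpleGraph V} {τ : V → ℕ} {S : Finset V}

def Activates (G : SimpleGraph V) (τ : V → ℕ) (A : Finset V) (u : V) : Prop :=
  τ u ≤ (nbrs G u ∩ A).card

lemma mem_nbrs {u w : V} : w ∈ nbrs G u ↔ G.Adj u w := by simp [nbrs]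

lemma mem_diffusion_succ {i : ℕ} {u : V} :
    u ∈ diffusion G τ S (i + 1) ↔
      u ∈ diffusion G τ S i ∨ Activates G τ (diffusion G τ S i) u := by
  simp [diffusion, Activates]

lemma Activates.mono {A B : Finset V} {u : V} (h : Activates G τ A u) (hAB : A ⊆ B) :
    Activates G τ B u :=
  h.trans (card_le_card (inter_subset_inter_left hAB))

lemma diffusion_subset_of_closed {W : Finset V} (hSW : S ⊆ W)
    (hW : ∀ u, Activates G τ W u → u ∈ W) (i : ℕ) : diffusion G τ S i ⊆ W := by
  induction i with
  | zero => exact hSW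
  | succ i ih =>
    intro u hu
    rcases mem_diffusion_succ.mp hu with hu | hu
    · exact ih hu
    · exact hW u (hu.mono ih)

lemma isTargetSet_iff : isTargetSet G τ S ↔ ∀ v, ∃ i, v ∈ diffusion G τ S i :=
  Set.eq_univ_iff_forall

end Diffusion

section Incidence

variable {α : Type*} {𝒯 : Finset (Finset α)}

lemma incGraph_adj_inl {x : α} {w : α ⊕ {T : Finset α // T ∈ 𝒯}} :
    (incGraph 𝒯).Adj (Sum.inl x) w ↔ ∃ T : {T : Finset α // T ∈ 𝒯}, w = Sum.inr T ∧ x ∈ T.1 := by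
  simp [incGraph]

lemma incGraph_adj_inr {T : {T : Finset α // T ∈ 𝒯}} {w : α ⊕ {T : Finset α // T ∈ 𝒯}} :
    (incGraph 𝒯).Adj (Sum.inr T) w ↔ ∃ x ∈ T.1, Sum.inl x = w := by
  simp [incGraph, eq_comm, and_comm]

variable [Fintype α]

lemma nbrs_incGraph_inr (T : {T : Finset α // T ∈ 𝒯}) :
    nbrs (incGraph 𝒯) (Sum.inr T) = T.1.map Function.Embedding.inl := by
  ext w
  simp [mem_nbrs, incGraph_adj_inr]

lemma activates_incGraph_inl_iff {A : Finset (α ⊕ {T : Finset α // T ∈ 𝒯})} {x : α} :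
    Activates (incGraph 𝒯) (incThreshold 𝒯) A (Sum.inl x) ↔
      ∃ T : {T : Finset α // T ∈ 𝒯}, x ∈ T.1 ∧ Sum.inr T ∈ A := by
  simp [Activates, incThreshold, Finset.Nonempty, mem_nbrs, incGraph_adj_inl]

lemma activates_incGraph_inr_iff {A : Finset (α ⊕ {T : Finset α // T ∈ 𝒯})}
    {T : {T : Finset α // T ∈ 𝒯}} :
    Activates (incGraph 𝒯) (incThreshold 𝒯) A (Sum.inr T) ↔ ∀ x ∈ T.1, Sum.inl x ∈ A := by
  rw [Activates, incThreshold, Sum.elim_inr, nbrs_incGraph_inr, ← card_map Function.Embedding.inl,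
    card_le_card_inter_iff]
  simp [subset_iff]

def incContent : α ⊕ {T : Finset α // T ∈ 𝒯} → Finset α :=
  Sum.elim (fun x ↦ {x}) Subtype.val

lemma incContent_subset_of_activates {U : Finset α} {v : α ⊕ {T : Finset α // T ∈ 𝒯}}
    (h : Activates (incGraph 𝒯) (incThreshold 𝒯) (univ.filter (incContent · ⊆ U)) v) :
    incContent v ⊆ U := by
  cases v with
  | inl x =>
    obtain ⟨T, hxT, hT⟩ := activates_incGraph_inl_iff.1 h
    simpa [incContent] using (mem_filter.1 hT).2 hxT
  | inr T =>
    intro x hx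
    simpa [incContent] using (mem_filter.1 (activates_incGraph_inr_iff.1 h x hx)).2

lemma incContent_subset_of_mem_diffusion {S : Finset (α ⊕ {T : Finset α // T ∈ 𝒯})}
    {U : Finset α} (hS : ∀ v ∈ S, incContent v ⊆ U) {i : ℕ} {v : α ⊕ {T : Finset α // T ∈ 𝒯}}
    (hv : v ∈ diffusion (incGraph 𝒯) (incThreshold 𝒯) S i) : incContent v ⊆ U :=
  (mem_filter.1 (diffusion_subset_of_closed (W := univ.filter (incContent · ⊆ U))
    (fun v hv ↦ mem_filter.2 ⟨mem_univ v, hS v hv⟩)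
    (fun v hv ↦ mem_filter.2 ⟨mem_univ v, incContent_subset_of_activates hv⟩) i hv)).2

lemma exists_setCover_card_le (hX : ∀ x : α, ∃ T ∈ 𝒯, x ∈ T)
    {S : Finset (α ⊕ {T : Finset α // T ∈ 𝒯})} (hS : isTargetSet (incGraph 𝒯) (incThreshold 𝒯) S) :
    ∃ 𝒮 : Finset (Finset α), 𝒮 ⊆ 𝒯 ∧ (∀ x : α, ∃ T ∈ 𝒮, x ∈ T) ∧ 𝒮.card ≤ S.card := by
  choose f hf𝒯 hf using hX
  let g : α ⊕ {T : Finset α // T ∈ 𝒯} → Finset α := Sum.elim f Subtype.val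
  refine ⟨S.image g, ?_, fun x ↦ ?_, card_image_le⟩
  · simp only [image_subset_iff]
    rintro (x | T) -
    exacts [hf𝒯 x, T.2]
  · have hS_content : ∀ v ∈ S, incContent v ⊆ (S.image g).biUnion id := fun v hv ↦
      (show incContent v ⊆ g v by cases v <;> simp [incContent, g, hf]).trans
        (subset_biUnion_of_mem id (mem_image_of_mem g hv))
    obtain ⟨i, hi⟩ := isTargetSet_iff.1 hS (Sum.inl x)
    simpa [incContent] using incContent_subset_of_mem_diffusion hS_content hi

lemma isTargetSet_map_inr {𝒮 : Finset {T : Finset α // T ∈ 𝒯}}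
    (h𝒮 : ∀ x : α, ∃ T ∈ 𝒮, x ∈ T.1) :
    isTargetSet (incGraph 𝒯) (incThreshold 𝒯) (𝒮.map Function.Embedding.inr) := by
  have hground : ∀ x,
      Sum.inl x ∈ diffusion (incGraph 𝒯) (incThreshold 𝒯) (𝒮.map Function.Embedding.inr) 1 := by
    intro x
    obtain ⟨T, hT, hxT⟩ := h𝒮 x
    exact mem_diffusion_succ.2 (Or.inr (activates_incGraph_inl_iff.2 ⟨T, hxT, mem_map_of_mem _ hT⟩))
  refine isTargetSet_iff.2 (Sum.rec (fun x ↦ ⟨1, hground x⟩) (fun T ↦ ⟨2, ?_⟩))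
  exact mem_diffusion_succ.2 (Or.inr (activates_incGraph_inr_iff.2 fun x _ ↦ hground x))

lemma exists_isTargetSet_card_eq {𝒮 : Finset (Finset α)} (h𝒮𝒯 : 𝒮 ⊆ 𝒯)
    (h𝒮 : ∀ x : α, ∃ T ∈ 𝒮, x ∈ T) :
    ∃ S, isTargetSet (incGraph 𝒯) (incThreshold 𝒯) S ∧ S.card = 𝒮.card := by
  refine ⟨(𝒮.subtype (· ∈ 𝒯)).map Function.Embedding.inr, isTargetSet_map_inr fun x ↦ ?_, ?_⟩
  · obtain ⟨T, hT, hxT⟩ := h𝒮 x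
    exact ⟨⟨T, h𝒮𝒯 hT⟩, mem_subtype.2 hT, hxT⟩
  · rw [card_map, card_subtype, filter_true_of_mem fun T hT ↦ h𝒮𝒯 hT]

end Incidence

/-- The minimum cardinality of a target set of the incidence graph of `(X, 𝒯)`
equals the minimum cardinality of a set cover of `(X, 𝒯)`. -/
theorem minTargetSet_eq_minSetCover {α : Type*} [Fintype α] (𝒯 : Finset (Finset α))
    (hX : ∀ x : α, ∃ T ∈ 𝒯, x ∈ T) :
    sInf {k : ℕ | ∃ S : Finset (α ⊕ {T : Finset α // T ∈ 𝒯}),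
        isTargetSet (incGraph 𝒯) (incThreshold 𝒯) S ∧ S.card = k} =
      sInf {k : ℕ | ∃ 𝒮 : Finset (Finset α),
        𝒮 ⊆ 𝒯 ∧ (∀ x : α, ∃ T ∈ 𝒮, x ∈ T) ∧ 𝒮.card = k} := by
  refine csInf_eq_csInf_of_forall_exists_le ?_ ?_
  · rintro _ ⟨S, hS, rfl⟩
    obtain ⟨𝒮, h𝒮𝒯, h𝒮, hcard⟩ := exists_setCover_card_le hX hS
    exact ⟨_, ⟨𝒮, h𝒮𝒯, h𝒮, rfl⟩, hcard⟩
  · rintro _ ⟨𝒮, h𝒮𝒯, h𝒮, rfl⟩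
    obtain ⟨S, hS, hcard⟩ := exists_isTargetSet_card_eq h𝒮𝒯 h𝒮
    exact ⟨_, ⟨S, hS, rfl⟩, hcard.le⟩
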